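/- Let c = c(x²) be the Catalan generating function in x² and F(x,y) = c/(1 − x y c). Then (1/2)(x∂_x − y∂_y) F(x,y) = (c(c−1)/(2−c)) · 1/(1 − x y c)², as an identity of formal power series in x and y. -/

import Mathlib

/-- `c(x²)` as a two-variable formal power series (variables `x = X 0`, `y = X 1`),
where `c` is the Catalan generating function. -/
noncomputable def catalanX2 : MvPowerSeries (Fin 2) ℚ :=
  fun d => if d 1 = 0 ∧ d 0 % 2 = 0 then (Nat.choose (d 0) (d 0 / 2) : ℚ) / (d 0 / 2 + 1) else 0

/-- Formal partial derivative of a two-variable formal power series with respect to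
variable `s`. -/
noncomputable def pderiv (s : Fin 2) (f : MvPowerSeries (Fin 2) ℚ) :
    MvPowerSeries (Fin 2) ℚ :=
  fun d => ((d s : ℕ) + 1 : ℚ) * MvPowerSeries.coeff (d + Finsupp.single s 1) f

open MvPowerSeries in
/-- `F(x,y) = c(x²)/(1 − x y c(x²))`. -/
noncomputable def Fxy : MvPowerSeries (Fin 2) ℚ :=
  catalanX2 * (1 - X 0 * X 1 * catalanX2)⁻¹

/-! The operator `E = x ∂_x − y ∂_y` is a derivation with `E x = x` and `E (x y) = 0`.
Applying it to the Catalan equation `c = 1 + x² c²` gives `(2 − c) E c = 2 c (c − 1)`.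
With `u = 1 − x y c` we have `E u = −x y E c`, so `E (c u⁻¹) = u⁻¹ E c + x y c u⁻² E c = u⁻² E c`,
because `u + x y c = 1`. -/

open MvPowerSeries

namespace Derivation

variable {R A : Type*} [CommRing R] [CommRing A] [Algebra R A] (D : Derivation R A A)

theorem two_sub_mul_apply_eq_of_eq_one_add_sq_mul_sq {x c : A} (hx : D x = x)
    (hc : c = 1 + x ^ 2 * c ^ 2) : (2 - c) * D c = 2 * (c * (c - 1)) := by
  have hDc : D c = 2 * x ^ 2 * c ^ 2 + 2 * x ^ 2 * c * D c := by
    conv_lhs => rw [hc]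
    rw [map_add, map_one_eq_zero, leibniz, leibniz_pow, leibniz_pow, hx]
    simp only [smul_eq_mul, nsmul_eq_mul]
    push_cast
    ring
  linear_combination c * hDc + (-2 * D c - 2 * c) * hc

theorem apply_mul_eq_sq_mul_of_mul_one_sub_eq_one {p c v : A} (hp : D p = 0)
    (hv : v * (1 - p * c) = 1) : D (c * v) = v ^ 2 * D c := by
  have hDv : D v = v ^ 2 * p * D c := by
    rw [D.leibniz_of_mul_eq_one hv, map_sub, map_one_eq_zero, leibniz, hp]
    simp only [smul_eq_mul]
    ring
  rw [leibniz, hDv, smul_eq_mul, smul_eq_mul]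
  linear_combination (-v * D c) * hv

end Derivation

section EulerDeriv

variable (R : Type*) [CommRing R]

noncomputable def eulerDeriv : Derivation R (MvPowerSeries (Fin 2) R) (MvPowerSeries (Fin 2) R) :=
  (X 0 : MvPowerSeries (Fin 2) R) • MvPowerSeries.pderiv R 0 -
    (X 1 : MvPowerSeries (Fin 2) R) • MvPowerSeries.pderiv R 1

theorem eulerDeriv_apply (f : MvPowerSeries (Fin 2) R) :
    eulerDeriv R f = X 0 * MvPowerSeries.pderiv R 0 f - X 1 * MvPowerSeries.pderiv R 1 f := by
  simp [eulerDeriv]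

theorem eulerDeriv_X_zero : eulerDeriv R (X 0) = X 0 := by
  simp [eulerDeriv_apply]

theorem eulerDeriv_X_zero_mul_X_one : eulerDeriv R (X 0 * X 1) = 0 := by
  simp only [Derivation.leibniz, eulerDeriv_apply, pderiv_X_self, pderiv_X_of_ne zero_ne_one,
    pderiv_X_of_ne one_ne_zero, smul_eq_mul]
  ring

noncomputable def substXZeroSq : PowerSeries R →ₐ[R] MvPowerSeries (Fin 2) R :=
  (PowerSeries.substAlgHom (.X 0)).comp (PowerSeries.substAlgHom (.X_pow two_ne_zero))

theorem substXZeroSq_X : substXZeroSq R PowerSeries.X = X 0 ^ 2 := by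
  simp [substXZeroSq, PowerSeries.substAlgHom_X]

end EulerDeriv

theorem pderiv_eq_mvPowerSeries_pderiv (s : Fin 2) (f : MvPowerSeries (Fin 2) ℚ) :
    pderiv s f = MvPowerSeries.pderiv ℚ s f := by
  ext d
  exact (MvPowerSeries.coeff_pderiv f d).trans (mul_comm _ _) |>.symm

theorem X_zero_mul_pderiv_sub_X_one_mul_pderiv (f : MvPowerSeries (Fin 2) ℚ) :
    X 0 * pderiv 0 f - X 1 * pderiv 1 f = eulerDeriv ℚ f := by
  rw [eulerDeriv_apply, pderiv_eq_mvPowerSeries_pderiv, pderiv_eq_mvPowerSeries_pderiv]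

theorem catalan_eq_choose_div {K : Type*} [Field K] [CharZero K] (m : ℕ) :
    (catalan m : K) = (2 * m).choose m / (m + 1) := by
  rw [eq_div_iff (Nat.cast_add_one_ne_zero m), ← Nat.centralBinom_eq_two_mul_choose,
    ← succ_mul_catalan_eq_centralBinom]
  push_cast
  ring

theorem catalanX2_eq_substXZeroSq :
    catalanX2 = substXZeroSq ℚ (PowerSeries.catalanSeries.map (Nat.castRingHom ℚ)) := by
  refine MvPowerSeries.ext fun e => ?_
  have he : e = Finsupp.single 0 (e 0) ↔ e 1 = 0 := by
    refine ⟨fun h => by rw [h]; simp, fun h => Finsupp.ext fun i => ?_⟩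
    fin_cases i <;> simp [h]
  change (if e 1 = 0 ∧ e 0 % 2 = 0 then _ else 0) = _
  rw [substXZeroSq, AlgHom.comp_apply, PowerSeries.coe_substAlgHom, PowerSeries.coe_substAlgHom,
    PowerSeries.coeff_subst_single, PowerSeries.coeff_subst_X_pow two_ne_zero]
  simp only [he, ← ite_and, Nat.dvd_iff_mod_eq_zero, Algebra.algebraMap_self, RingHom.id_apply,
    PowerSeries.coeff_map, PowerSeries.catalanSeries_coeff, eq_natCast]
  split_ifs with h
  · obtain ⟨m, hm⟩ : 2 ∣ e 0 := Nat.dvd_of_mod_eq_zero h.2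
    rw [hm, Nat.mul_div_cancel_left m two_pos, catalan_eq_choose_div]
    push_cast
    ring
  · rfl

theorem catalanX2_eq_one_add_X_sq_mul_sq : catalanX2 = 1 + X 0 ^ 2 * catalanX2 ^ 2 := by
  have h := congrArg (fun f => substXZeroSq ℚ (PowerSeries.map (Nat.castRingHom ℚ) f))
    PowerSeries.catalanSeries_sq_mul_X_add_one
  simp only [map_add, map_mul, map_pow, map_one, PowerSeries.map_X, substXZeroSq_X,
    ← catalanX2_eq_substXZeroSq] at h
  linear_combination -h

theorem constantCoeff_catalanX2 : constantCoeff catalanX2 = 1 := by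
  conv_lhs => rw [catalanX2_eq_one_add_X_sq_mul_sq]
  simp

open MvPowerSeries in
/-- `(1/2)(x∂_x − y∂_y) F(x,y) = (c(c−1)/(2−c))·1/(1 − x y c)²` with `c = c(x²)`. -/
theorem half_euler_deriv_F :
    (1 / 2 : ℚ) • (X 0 * pderiv 0 Fxy - X 1 * pderiv 1 Fxy) =
      catalanX2 * (catalanX2 - 1) * (2 - catalanX2)⁻¹ *
        ((1 - X 0 * X 1 * catalanX2)⁻¹) ^ 2 := by
  set c := catalanX2
  set v := (1 - X 0 * X 1 * c)⁻¹
  have hv : v * (1 - X 0 * X 1 * c) = 1 := MvPowerSeries.inv_mul_cancel _ (by simp)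
  have hw : (2 - c)⁻¹ * (2 - c) = 1 :=
    MvPowerSeries.inv_mul_cancel _ (by norm_num [c, constantCoeff_catalanX2, map_ofNat])
  have hEc := (eulerDeriv ℚ).two_sub_mul_apply_eq_of_eq_one_add_sq_mul_sq
    (eulerDeriv_X_zero ℚ) catalanX2_eq_one_add_X_sq_mul_sq
  have hEF := (eulerDeriv ℚ).apply_mul_eq_sq_mul_of_mul_one_sub_eq_one
    (eulerDeriv_X_zero_mul_X_one ℚ) hv
  have hEc_eq : eulerDeriv ℚ c = 2 * ((2 - c)⁻¹ * (c * (c - 1))) := by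
    linear_combination (2 - c)⁻¹ * hEc - eulerDeriv ℚ c * hw
  rw [X_zero_mul_pderiv_sub_X_one_mul_pderiv, Fxy, hEF, hEc_eq, mul_left_comm, two_mul, smul_add,
    ← add_smul, add_halves, one_smul]
  ring
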